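/- arXiv:math/0703051 — 5 statements merged into one kernel-verified Lean document; each statement's English description precedes it below -/
import Mathlib

section
/- Let p be a prime number, r a positive odd integer, and R = Z/p^r. If S is a clique of Γ₀(R) of maximum size (i.e., |S| = ω(Γ₀(R))), then S contains exactly one element a with a² ≠ 0. -/
/-!
Write `r = 2m + 1`. Comparing `p`-adic valuations, `x * y = 0` in `ℤ/p^r` forces `p^(m+1)` to
divide `x` or `y`, i.e. `x² = 0` or `y² = 0`; so two elements with nonzero square are never
adjacent. The elements of square zero are the `p^m` multiples of `p^(m+1)`; together with `p^m`
they form a clique of size `p^m + 1`, so a maximum clique cannot consist of them alone.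
-/

/-- Beck's zero-divisor graph `Γ₀(R)`: vertices are all elements of `R`, and two
distinct vertices `x`, `y` are adjacent iff `x * y = 0`. -/
def gammaZero (R : Type*) [CommRing R] : SimpleGraph R where
  Adj x y := x ≠ y ∧ x * y = 0
  symm := ⟨fun x y ⟨h1, h2⟩ => ⟨h1.symm, by rwa [mul_comm]⟩⟩
  loopless := ⟨fun x ⟨h1, _⟩ => h1 rfl⟩

/-- The clique number of a graph, as an extended natural number: the least upper
bound of the sizes of (finite) cliques in `G`. -/
noncomputable def cliqueNumE {V : Type*} (G : SimpleGraph V) : ℕ∞ :=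
  ⨆ (s : Finset V) (_ : G.IsClique (s : Set V)), (s.card : ℕ∞)

open Finset

theorem Nat.Prime.pow_succ_dvd_or_pow_succ_dvd_of_pow_dvd_mul {p a b k l : ℕ} (hp : p.Prime)
    (h : p ^ (k + l + 1) ∣ a * b) : p ^ (k + 1) ∣ a ∨ p ^ (l + 1) ∣ b := by
  rcases eq_or_ne a 0 with rfl | ha
  · simp
  rcases eq_or_ne b 0 with rfl | hb
  · simp
  simp only [hp.pow_dvd_iff_le_factorization, ha, hb, mul_ne_zero_iff, ne_eq, not_false_eq_true,
    and_self, Nat.factorization_mul, Finsupp.add_apply] at h ⊢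
  omega

theorem le_cliqueNumE_of_isClique {V : Type*} {G : SimpleGraph V} {s : Finset V}
    (hs : G.IsClique (s : Set V)) : (#s : ℕ∞) ≤ cliqueNumE G :=
  le_iSup₂ (f := fun (t : Finset V) (_ : G.IsClique (t : Set V)) => (#t : ℕ∞)) s hs

theorem isClique_gammaZero_iff {R : Type*} [CommRing R] {s : Set R} :
    (gammaZero R).IsClique s ↔ s.Pairwise fun x y => x * y = 0 := by
  simp only [SimpleGraph.IsClique, gammaZero]
  exact ⟨fun h x hx y hy hxy => (h hx hy hxy).2, fun h x hx y hy hxy => ⟨hxy, h hx hy hxy⟩⟩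

theorem SimpleGraph.IsClique.subsingleton_sq_ne_zero {R : Type*} [CommRing R] {s : Set R}
    (hs : (gammaZero R).IsClique s) (hR : ∀ x y : R, x * y = 0 → x ^ 2 = 0 ∨ y ^ 2 = 0) :
    {a ∈ s | a ^ 2 ≠ 0}.Subsingleton := by
  rintro a ⟨ha, ha2⟩ b ⟨hb, hb2⟩
  by_contra hab
  rcases hR a b (hs ha hb hab).2 with h | h
  exacts [ha2 h, hb2 h]

namespace ZMod

theorem card_filter_dvd_val_mul {n q : ℕ} [NeZero n] (h : q ∣ n) :
    #{x : ZMod n | q ∣ x.val} * q = n := by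
  let f := (castHom h (ZMod q)).toAddMonoidHom
  have mem_ker : ∀ x, x ∈ f.ker ↔ q ∣ x.val := fun x => by
    rw [AddMonoidHom.mem_ker, ← natCast_eq_zero_iff]
    exact Iff.of_eq (congrArg (· = 0) (cast_eq_val x))
  have := f.ker.card_mul_index
  rw [AddSubgroup.index_ker, f.range_eq_top_of_surjective (ringHom_surjective _)] at this
  simpa [Nat.card_zmod, Nat.card_eq_fintype_card, ← Fintype.card_subtype, mem_ker] using this

theorem mul_eq_zero_iff_dvd_val_mul_val {n : ℕ} [NeZero n] (x y : ZMod n) :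
    x * y = 0 ↔ n ∣ x.val * y.val := by
  rw [← natCast_eq_zero_iff, Nat.cast_mul, natCast_zmod_val, natCast_zmod_val]

theorem natCast_pow_eq_zero (p n : ℕ) : (p : ZMod (p ^ n)) ^ n = 0 := by
  exact_mod_cast natCast_self (p ^ n)

variable {p m : ℕ} [Fact p.Prime]

theorem sq_eq_zero_iff_pow_dvd_val (x : ZMod (p ^ (2 * m + 1))) :
    x ^ 2 = 0 ↔ p ^ (m + 1) ∣ x.val := by
  rw [sq, mul_eq_zero_iff_dvd_val_mul_val]
  constructor
  · intro h
    have h' : p ^ (m + m + 1) ∣ x.val * x.val := by rwa [← two_mul]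
    exact (Nat.Prime.pow_succ_dvd_or_pow_succ_dvd_of_pow_dvd_mul Fact.out h').elim id id
  · intro h
    exact (pow_dvd_pow p (by omega)).trans (pow_add p (m + 1) (m + 1) ▸ mul_dvd_mul h h)

theorem sq_eq_zero_or_sq_eq_zero_of_mul_eq_zero {x y : ZMod (p ^ (2 * m + 1))} (h : x * y = 0) :
    x ^ 2 = 0 ∨ y ^ 2 = 0 := by
  have h' : p ^ (m + m + 1) ∣ x.val * y.val := by
    rwa [← two_mul, ← mul_eq_zero_iff_dvd_val_mul_val]
  simpa only [sq_eq_zero_iff_pow_dvd_val] using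
    Nat.Prime.pow_succ_dvd_or_pow_succ_dvd_of_pow_dvd_mul Fact.out h'

theorem card_filter_sq_eq_zero : #{x : ZMod (p ^ (2 * m + 1)) | x ^ 2 = 0} = p ^ m := by
  have h := card_filter_dvd_val_mul (pow_dvd_pow p (by omega : m + 1 ≤ 2 * m + 1))
  simp only [← sq_eq_zero_iff_pow_dvd_val] at h
  refine Nat.eq_of_mul_eq_mul_right (pow_pos (Fact.out : p.Prime).pos (m + 1)) (h.trans ?_)
  rw [← pow_add]
  congr 1
  omega

theorem pow_dvd_of_sq_eq_zero {x : ZMod (p ^ (2 * m + 1))} (hx : x ^ 2 = 0) :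
    (p : ZMod (p ^ (2 * m + 1))) ^ (m + 1) ∣ x := by
  obtain ⟨t, ht⟩ := (sq_eq_zero_iff_pow_dvd_val x).mp hx
  exact ⟨t, by rw [← natCast_zmod_val x, ht]; push_cast; rfl⟩

theorem exists_isClique_gammaZero_card_eq :
    ∃ T : Finset (ZMod (p ^ (2 * m + 1))),
      (gammaZero (ZMod (p ^ (2 * m + 1)))).IsClique (T : Set _) ∧ #T = p ^ m + 1 := by
  set c := (p : ZMod (p ^ (2 * m + 1))) ^ m
  have hc : c ∉ ({x | x ^ 2 = 0} : Finset (ZMod (p ^ (2 * m + 1)))) := by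
    rw [mem_filter_univ, ← pow_mul, ← Nat.cast_pow, natCast_eq_zero_iff,
      Nat.pow_dvd_pow_iff_le_right (Fact.out : p.Prime).one_lt]
    omega
  refine ⟨insert c ({x | x ^ 2 = 0} : Finset (ZMod (p ^ (2 * m + 1)))), ?_,
    by rw [card_insert_of_notMem hc, card_filter_sq_eq_zero]⟩
  rw [isClique_gammaZero_iff, coe_insert, coe_filter_univ, Set.pairwise_insert]
  constructor
  · intro x hx y hy _
    obtain ⟨a, rfl⟩ := pow_dvd_of_sq_eq_zero hx
    obtain ⟨b, rfl⟩ := pow_dvd_of_sq_eq_zero hy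
    linear_combination (p * a * b : ZMod (p ^ (2 * m + 1))) * natCast_pow_eq_zero p (2 * m + 1)
  · intro x hx _
    obtain ⟨a, rfl⟩ := pow_dvd_of_sq_eq_zero hx
    constructor <;> linear_combination a * natCast_pow_eq_zero p (2 * m + 1)

end ZMod

theorem stmt3_general (p r : ℕ) (hp : p.Prime) (hro : Odd r)
    (S : Finset (ZMod (p ^ r)))
    (hS : (gammaZero (ZMod (p ^ r))).IsClique (S : Set (ZMod (p ^ r))))
    (hmax : (S.card : ℕ∞) = cliqueNumE (gammaZero (ZMod (p ^ r)))) :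
    ∃! a, a ∈ S ∧ a ^ 2 ≠ 0 := by
  have := Fact.mk hp
  obtain ⟨m, rfl⟩ := hro
  obtain ⟨T, hT, hTcard⟩ := ZMod.exists_isClique_gammaZero_card_eq (p := p) (m := m)
  have hS_card : p ^ m < #S := by
    have h := le_cliqueNumE_of_isClique hT
    rw [← hmax, hTcard] at h
    exact_mod_cast h
  obtain ⟨a, ha⟩ : ∃ a ∈ S, a ^ 2 ≠ 0 := by
    by_contra! h
    have h_sub : S ⊆ ({x | x ^ 2 = 0} : Finset (ZMod (p ^ (2 * m + 1)))) :=
      fun x hx => (mem_filter_univ x).mpr (h x hx)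
    have := card_le_card h_sub
    rw [ZMod.card_filter_sq_eq_zero] at this
    omega
  exact ⟨a, ha, fun b hb => hS.subsingleton_sq_ne_zero
    (fun _ _ => ZMod.sq_eq_zero_or_sq_eq_zero_of_mul_eq_zero) hb ⟨ha.1, ha.2⟩⟩

theorem stmt3 (p r : ℕ) (hp : p.Prime) (hr : 0 < r) (hro : Odd r)
    (S : Finset (ZMod (p ^ r)))
    (hS : (gammaZero (ZMod (p ^ r))).IsClique (S : Set (ZMod (p ^ r))))
    (hmax : (S.card : ℕ∞) = cliqueNumE (gammaZero (ZMod (p ^ r)))) :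
    ∃! a, a ∈ S ∧ a ^ 2 ≠ 0 :=
  stmt3_general p r hp hro S hS hmax
end

section
/- Let R₁ and R₂ be commutative rings with 1 such that R₂ is reduced (has no nonzero nilpotent elements), and let R = R₁ × R₂. Then χ(Γ₀(R)) = χ(Γ₀(R₁)) + χ(Γ₀(R₂)) − 1. -/
/-! Colour `(x, 0)` by a colouring of `Γ₀(R₁)` and `(x, y)` with `y ≠ 0` by a colouring of
`Γ₀(R₂)`, avoiding the colour of `0`, which is adjacent to every such `y`; since `R₂` is reduced,
`y * y' = 0` with `y ≠ 0` forces `y ≠ y'`, so this is proper. Conversely, the copies `R₁ × 0` and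
`0 × R₂` of `Γ₀(R₁)` and `Γ₀(R₂)` meet only in `(0, 0)` and are otherwise completely joined, so in
any colouring of `Γ₀(R₁ × R₂)` their colour sets share exactly one colour. -/

open SimpleGraph

theorem SimpleGraph.Coloring.colorable_ncard_range {V α : Type*} {G : SimpleGraph V} [Finite α]
    (C : G.Coloring α) : G.Colorable (Set.range C).ncard := by
  have := Fintype.ofFinite (Set.range C)
  rw [← Nat.card_coe_set_eq, Nat.card_eq_fintype_card]
  exact (Coloring.mk (Set.rangeFactorization C)
    fun hvw heq => C.valid hvw (congrArg Subtype.val heq)).colorable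

namespace gammaZero

variable {R R₁ R₂ : Type*} [CommRing R] [CommRing R₁] [CommRing R₂]

theorem adj_of_mul_eq_zero [IsReduced R] {x y : R} (hx : x ≠ 0) (h : x * y = 0) :
    (gammaZero R).Adj x y := by
  refine ⟨?_, h⟩
  rintro rfl
  exact hx (IsReduced.eq_zero x ⟨2, by rw [pow_two, h]⟩)

theorem adj_zero {x : R} (hx : x ≠ 0) : (gammaZero R).Adj x 0 := ⟨hx, mul_zero x⟩

theorem prod_adj {p q : R₁ × R₂} :
    (gammaZero (R₁ × R₂)).Adj p q ↔ p ≠ q ∧ p.1 * q.1 = 0 ∧ p.2 * q.2 = 0 := by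
  simp [gammaZero, Prod.ext_iff]

def inlHom : gammaZero R₁ →g gammaZero (R₁ × R₂) where
  toFun x := (x, 0)
  map_rel' := fun ⟨hne, hmul⟩ => prod_adj.2 ⟨by simpa using hne, hmul, mul_zero 0⟩

def inrHom : gammaZero R₂ →g gammaZero (R₁ × R₂) where
  toFun y := (0, y)
  map_rel' := fun ⟨hne, hmul⟩ => prod_adj.2 ⟨by simpa using hne, mul_zero 0, hmul⟩

noncomputable def prodColoring [IsReduced R₂] {α β : Type*} (c₁ : (gammaZero R₁).Coloring α)
    (c₂ : (gammaZero R₂).Coloring β) :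
    (gammaZero (R₁ × R₂)).Coloring (α ⊕ {b : β // b ≠ c₂ 0}) := by
  classical
  refine Coloring.mk (fun p => if h : p.2 = 0 then .inl (c₁ p.1)
    else .inr ⟨c₂ p.2, c₂.valid (adj_zero h)⟩) ?_
  rintro ⟨x, y⟩ ⟨x', y'⟩ hadj
  obtain ⟨hne, hmul₁, hmul₂⟩ := prod_adj.1 hadj
  by_cases hy : y = 0 <;> by_cases hy' : y' = 0 <;> simp only [hy, hy', dite_true, dite_false,
    ne_eq, Sum.inl.injEq, Sum.inr.injEq, reduceCtorEq, not_false_eq_true, Subtype.mk.injEq]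
  · exact c₁.valid ⟨fun h => hne (by simp [h, hy, hy']), hmul₁⟩
  · exact c₂.valid (adj_of_mul_eq_zero hy hmul₂)

theorem colorable_prod [IsReduced R₂] {n₁ n₂ : ℕ} (h₁ : (gammaZero R₁).Colorable n₁)
    (h₂ : (gammaZero R₂).Colorable n₂) : (gammaZero (R₁ × R₂)).Colorable (n₁ + (n₂ - 1)) := by
  obtain ⟨c₁⟩ := h₁
  obtain ⟨c₂⟩ := h₂
  simpa [Fintype.card_subtype_compl] using (prodColoring c₁ c₂).colorable

theorem exists_colorable_add_le_of_colorable_prod {n : ℕ}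
    (h : (gammaZero (R₁ × R₂)).Colorable n) :
    ∃ a b, (gammaZero R₁).Colorable a ∧ (gammaZero R₂).Colorable b ∧ a + b ≤ n + 1 := by
  obtain ⟨c⟩ := h
  set A := Set.range (c.comap inlHom)
  set B := Set.range (c.comap inrHom)
  have hAB : A ∩ B = {c (0, 0)} := by
    ext t
    constructor
    · rintro ⟨⟨x, rfl⟩, y, hy⟩
      by_cases hxy : ((x, 0) : R₁ × R₂) = (0, y)
      · obtain ⟨rfl, rfl⟩ := Prod.mk.inj hxy
        rfl
      · exact absurd hy.symm (c.valid (v := (x, 0)) (w := (0, y)) ⟨hxy, by simp⟩)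
    · rintro rfl
      exact ⟨⟨0, rfl⟩, 0, rfl⟩
  refine ⟨A.ncard, B.ncard, (c.comap inlHom).colorable_ncard_range,
    (c.comap inrHom).colorable_ncard_range, ?_⟩
  have hunion := Set.ncard_union_add_ncard_inter A B
  have hle := Set.ncard_le_card (A ∪ B)
  rw [hAB, Set.ncard_singleton] at hunion
  rw [Nat.card_eq_fintype_card, Fintype.card_fin] at hle
  omega

theorem chromaticNumber_prod_add_one_le [IsReduced R₂] :
    (gammaZero (R₁ × R₂)).chromaticNumber + 1 ≤
      (gammaZero R₁).chromaticNumber + (gammaZero R₂).chromaticNumber := by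
  rw [chromaticNumber_eq_iInf (G := gammaZero R₁), chromaticNumber_eq_iInf (G := gammaZero R₂)]
  refine ENat.le_iInf_add_iInf fun ⟨n₁, h₁⟩ ⟨n₂, h₂⟩ => ?_
  have hn₂ : 0 < n₂ := (h₂.some 0).pos
  calc (gammaZero (R₁ × R₂)).chromaticNumber + 1 ≤ ((n₁ + (n₂ - 1) : ℕ) : ℕ∞) + 1 := by
        gcongr; exact (colorable_prod h₁ h₂).chromaticNumber_le
    _ = n₁ + n₂ := by norm_cast; omega

theorem chromaticNumber_add_le_prod_add_one :
    (gammaZero R₁).chromaticNumber + (gammaZero R₂).chromaticNumber ≤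
      (gammaZero (R₁ × R₂)).chromaticNumber + 1 := by
  rw [chromaticNumber_eq_iInf (G := gammaZero (R₁ × R₂)), ENat.iInf_add]
  refine le_iInf fun ⟨n, h⟩ => ?_
  obtain ⟨a, b, ha, hb, hab⟩ := exists_colorable_add_le_of_colorable_prod h
  calc (gammaZero R₁).chromaticNumber + (gammaZero R₂).chromaticNumber ≤ a + b :=
        add_le_add ha.chromaticNumber_le hb.chromaticNumber_le
    _ ≤ n + 1 := by exact_mod_cast hab

end gammaZero

theorem stmt6 (R₁ R₂ : Type*) [CommRing R₁] [CommRing R₂] (hred : IsReduced R₂) :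
    (gammaZero (R₁ × R₂)).chromaticNumber =
      (gammaZero R₁).chromaticNumber + (gammaZero R₂).chromaticNumber - 1 := by
  rw [← le_antisymm gammaZero.chromaticNumber_prod_add_one_le
    gammaZero.chromaticNumber_add_le_prod_add_one]
  exact (ENat.addLECancellable_of_ne_top ENat.one_ne_top).add_tsub_cancel_right.symm
end

section
/- Let R = R₁ × ⋯ × R_k be a finite product of commutative rings with 1, where each R_i is an integral domain and k ≥ 1. Then χ(Γ₀(R)) = ω(Γ₀(R)) = k + 1. -/
/-!
The elements `0, e₁, …, e_k` (with `eᵢ = Pi.single i 1`) are pairwise orthogonal, so they form a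
clique of size `k + 1`. Conversely, colouring `0` by an extra colour and each nonzero `x` by some
index `i` with `xᵢ ≠ 0` is proper: in a product of domains `xy = 0` forces `x` and `y` to have
disjoint supports. Since `ω ≤ χ` for every graph, both numbers equal `k + 1`.
-/

open SimpleGraph

theorem cliqueNumE_le_chromaticNumber {V : Type*} (G : SimpleGraph V) :
    cliqueNumE G ≤ G.chromaticNumber :=
  iSup₂_le fun _ hs => hs.card_le_chromaticNumber

theorem SimpleGraph.IsClique.card_le_cliqueNumE {V : Type*} {G : SimpleGraph V} {s : Finset V}
    (hs : G.IsClique (s : Set V)) : (s.card : ℕ∞) ≤ cliqueNumE G :=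
  le_iSup₂ (f := fun (t : Finset V) (_ : G.IsClique (t : Set V)) => (t.card : ℕ∞)) s hs

namespace gammaZero

theorem zero_adj {R : Type*} [CommRing R] {x : R} (hx : x ≠ 0) : (gammaZero R).Adj 0 x :=
  ⟨hx.symm, zero_mul x⟩

variable {ι : Type*} {R : ι → Type*} [∀ i, CommRing (R i)]

noncomputable def piColoring [∀ i, NoZeroDivisors (R i)] :
    (gammaZero (∀ i, R i)).Coloring (Option ι) := by
  classical
  refine Coloring.mk (fun x => if h : x = 0 then none else some (Function.ne_iff.mp h).choose) ?_
  rintro x y ⟨hxy, hmul⟩ hcol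
  by_cases hx : x = 0 <;> by_cases hy : y = 0
  · exact hxy (hx.trans hy.symm)
  all_goals simp only [hx, hy, dite_true, dite_false, reduceCtorEq, Option.some.injEq] at hcol
  have hxi := (Function.ne_iff.mp hx).choose_spec
  have hyi := (Function.ne_iff.mp hy).choose_spec
  rw [← hcol] at hyi
  exact mul_ne_zero hxi hyi (congrFun hmul _)

theorem chromaticNumber_pi_le [Fintype ι] [∀ i, NoZeroDivisors (R i)] :
    (gammaZero (∀ i, R i)).chromaticNumber ≤ (Fintype.card ι + 1 : ℕ) := by
  simpa using (piColoring (R := R)).colorable.chromaticNumber_le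

theorem isClique_insert_zero_range_single [DecidableEq ι] [∀ i, Nontrivial (R i)] :
    (gammaZero (∀ i, R i)).IsClique (insert 0 (Set.range fun i => Pi.single i 1)) := by
  refine isClique_insert.mpr ⟨?_, ?_⟩
  · rintro _ ⟨i, rfl⟩ _ ⟨j, rfl⟩ hij
    have hij' : i ≠ j := fun h => hij (h ▸ rfl)
    refine ⟨hij, funext fun l => ?_⟩
    by_cases hl : l = i
    · subst hl; simp [hij']
    · simp [hl]
  · rintro _ ⟨i, rfl⟩ -
    exact zero_adj (Pi.single_ne_zero_iff.mpr one_ne_zero)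

theorem card_insert_zero_image_single [DecidableEq ι] [Fintype ι] [∀ i, Nontrivial (R i)]
    [DecidableEq (∀ i, R i)] :
    (insert 0 (Finset.univ.image fun i => (Pi.single i 1 : ∀ i, R i))).card =
      Fintype.card ι + 1 := by
  have hinj : Function.Injective fun i => (Pi.single i 1 : ∀ i, R i) := fun i j hij => by
    by_contra h
    simpa [h] using congrFun hij i
  rw [Finset.card_insert_of_notMem, Finset.card_image_of_injective _ hinj, Finset.card_univ]
  simp

theorem card_add_one_le_cliqueNumE_pi [Fintype ι] [∀ i, Nontrivial (R i)] :
    ((Fintype.card ι + 1 : ℕ) : ℕ∞) ≤ cliqueNumE (gammaZero (∀ i, R i)) := by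
  classical
  have hs := isClique_insert_zero_range_single (R := R)
  rw [← Set.image_univ, ← Finset.coe_univ, ← Finset.coe_image, ← Finset.coe_insert] at hs
  simpa only [card_insert_zero_image_single] using hs.card_le_cliqueNumE

end gammaZero

theorem stmt10_general (k : ℕ) (R : Fin k → Type*) [∀ i, CommRing (R i)]
    [∀ i, IsDomain (R i)] :
    (gammaZero (∀ i, R i)).chromaticNumber = cliqueNumE (gammaZero (∀ i, R i)) ∧
    cliqueNumE (gammaZero (∀ i, R i)) = ((k + 1 : ℕ) : ℕ∞) := by
  have hχ := gammaZero.chromaticNumber_pi_le (R := R)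
  have hω := gammaZero.card_add_one_le_cliqueNumE_pi (R := R)
  have hωχ := cliqueNumE_le_chromaticNumber (gammaZero (∀ i, R i))
  rw [Fintype.card_fin] at hχ hω
  exact ⟨le_antisymm (hχ.trans hω) hωχ, le_antisymm (hωχ.trans hχ) hω⟩

theorem stmt10 (k : ℕ) (hk : 1 ≤ k) (R : Fin k → Type*) [∀ i, CommRing (R i)]
    [∀ i, IsDomain (R i)] :
    (gammaZero (∀ i, R i)).chromaticNumber = cliqueNumE (gammaZero (∀ i, R i)) ∧
    cliqueNumE (gammaZero (∀ i, R i)) = ((k + 1 : ℕ) : ℕ∞) :=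
  stmt10_general k R
end

section
/- Let n ≥ 0 and k ≥ 0 with n + k ≥ 1, let p₁, …, p_k be prime numbers and r₁, …, r_k positive integers, and let R = ℤⁿ × (Z/p₁^{r₁}) × ⋯ × (Z/p_k^{r_k}). Then χ(Γ₀(R)) = ω(Γ₀(R)) = ∏_{i=1}^k p_i^{⌊r_i/2⌋} + t + n, where t is the number of indices i with r_i odd and ⌊x⌋ denotes the floor function. -/
/-!
Write `h = ⌊r/2⌋` and `m = ⌈r/2⌉ = r - h`. In `ZMod (p ^ r)` the `p ^ h` elements `p ^ m * c`
multiply pairwise to zero, and for odd `r` they are all annihilated by `p ^ h` as well. Placing these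
in the `ZMod` factors, together with the unit vectors of `ℤⁿ`, gives a clique of the claimed size.

A colouring with that many colours: an element with a nonzero integer coordinate `j` gets
colour `j`; otherwise, one having a coordinate `i` of valuation exactly `h` with `r i` odd gets
colour `i`, since two such elements never multiply to zero; every other element gets the tuple of
the quotients `x i / p ^ m`, with `1` where `p ^ m ∤ x i`. This last colour class is independent:
a coordinate of valuation `< h` is annihilated only by multiples of `p ^ (m + 1)`, never by the
multiple `p ^ m` of colour `1`.
-/

open Function Set SimpleGraph

section CliqueColoring

variable {V α : Type*} {G : SimpleGraph V}

theorem le_cliqueNumE {s : Finset V} (hs : G.IsClique (s : Set V)) : (s.card : ℕ∞) ≤ cliqueNumE G :=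
  le_iSup₂_of_le s hs le_rfl

theorem cliqueNumE_le_of_coloring [Fintype α] (C : G.Coloring α) :
    cliqueNumE G ≤ Fintype.card α :=
  iSup₂_le fun _ hs => Nat.cast_le.mpr (hs.card_le_of_coloring C)

theorem chromaticNumber_eq_cliqueNumE_of_coloring [Fintype α] {f : α → V} (hf : Injective f)
    (hclique : G.IsClique (range f)) (C : G.Coloring α) :
    G.chromaticNumber = cliqueNumE G ∧ cliqueNumE G = Fintype.card α := by
  classical
  have hs : G.IsClique (Finset.univ.image f : Set V) := by simpa using hclique
  have hcard : ((Finset.univ.image f).card : ℕ∞) = Fintype.card α := by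
    rw [Finset.card_image_of_injective _ hf, Finset.card_univ]
  have hω : cliqueNumE G = Fintype.card α :=
    le_antisymm (cliqueNumE_le_of_coloring C) (hcard ▸ le_cliqueNumE hs)
  refine ⟨le_antisymm ?_ ?_, hω⟩
  · exact hω ▸ C.colorable.chromaticNumber_le
  · exact hω ▸ hcard ▸ hs.card_le_chromaticNumber

end CliqueColoring

theorem gammaZero_isClique_range {R α : Type*} [CommRing R] {f : α → R}
    (h : ∀ a b, a ≠ b → f a * f b = 0) : (gammaZero R).IsClique (range f) := by
  rintro _ ⟨a, rfl⟩ _ ⟨b, rfl⟩ hne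
  exact ⟨hne, h a b (ne_of_apply_ne f hne)⟩

section DomainFactor

variable {R D ι α : Type*} [CommRing R] [CommRing D] [DecidableEq ι]

def extendByDomain (f : α → R) : α ⊕ ι → (ι → D) × R
  | .inl a => (0, f a)
  | .inr j => (Pi.single j 1, 0)

theorem extendByDomain_injective [Nontrivial D] {f : α → R} (hf : Injective f) :
    Injective (extendByDomain (D := D) (ι := ι) f) := by
  rintro (a | j) (b | j') h
  · exact congrArg Sum.inl (hf (congrArg Prod.snd h))
  · simpa [extendByDomain] using congrFun (congrArg Prod.fst h) j'
  · simpa [extendByDomain] using congrFun (congrArg Prod.fst h) j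
  · simpa [extendByDomain, Pi.single_apply, eq_comm] using congrFun (congrArg Prod.fst h) j

theorem extendByDomain_mul_eq_zero {f : α → R} (hf : ∀ a b, a ≠ b → f a * f b = 0) (x y : α ⊕ ι)
    (hxy : x ≠ y) : extendByDomain (D := D) f x * extendByDomain f y = 0 := by
  rcases x with a | j <;> rcases y with b | j'
  · simpa [extendByDomain] using hf a b (by rintro rfl; exact hxy rfl)
  · ext i <;> simp [extendByDomain]
  · ext i <;> simp [extendByDomain]
  · have hjj : j ≠ j' := fun h => hxy (congrArg Sum.inr h)
    refine Prod.ext ?_ (zero_mul _)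
    change (Pi.single j 1 : ι → D) * Pi.single j' 1 = 0
    rw [← Pi.single_mul_right, Pi.single_eq_of_ne hjj.symm, zero_mul, Pi.single_zero]

open Classical in
noncomputable def SimpleGraph.Coloring.extendByDomain [IsDomain D] (C : (gammaZero R).Coloring α) :
    (gammaZero ((ι → D) × R)).Coloring (α ⊕ ι) :=
  Coloring.mk (fun x => if h : ∃ j, x.1 j ≠ 0 then .inr h.choose else .inl (C x.2))
    fun {x y} ⟨hne, hxy⟩ hc => by
      split_ifs at hc with hx hy hy
      · have hj : hx.choose = hy.choose := Sum.inr_injective hc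
        exact mul_ne_zero hx.choose_spec (hj ▸ hy.choose_spec) (congrFun (congrArg Prod.fst hxy) _)
      · simp only [not_exists, not_not] at hx hy
        refine C.valid ⟨fun h => hne (Prod.ext (funext fun j => (hx j).trans (hy j).symm) h), ?_⟩
          (Sum.inl_injective hc)
        exact congrArg Prod.snd hxy

end DomainFactor

theorem Nat.Prime.not_pow_dvd_mul {p a b s t r : ℕ} (hp : p.Prime) (ha : ¬p ^ s ∣ a)
    (hb : ¬p ^ t ∣ b) (hst : s + t ≤ r + 1) : ¬p ^ r ∣ a * b := by
  have ha0 : a ≠ 0 := by rintro rfl; exact ha (dvd_zero _)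
  have hb0 : b ≠ 0 := by rintro rfl; exact hb (dvd_zero _)
  rw [hp.pow_dvd_iff_le_factorization ha0, not_le] at ha
  rw [hp.pow_dvd_iff_le_factorization hb0, not_le] at hb
  rw [hp.pow_dvd_iff_le_factorization (mul_ne_zero ha0 hb0), Nat.factorization_mul ha0 hb0,
    Finsupp.add_apply]
  omega

theorem ZMod.mul_eq_zero_iff_dvd_val_mul_val_s12 {N : ℕ} [NeZero N] (a b : ZMod N) :
    a * b = 0 ↔ N ∣ a.val * b.val := by
  rw [← ZMod.natCast_eq_zero_iff, Nat.cast_mul, ZMod.natCast_zmod_val, ZMod.natCast_zmod_val]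

section PrimePowerFactor

def IsMiddle (p r : ℕ) (a : ZMod (p ^ r)) : Prop :=
  p ^ (r / 2) ∣ a.val ∧ ¬p ^ (r - r / 2) ∣ a.val

def halfColor (p r : ℕ) (a : ZMod (p ^ r)) : ZMod (p ^ (r / 2)) :=
  if p ^ (r - r / 2) ∣ a.val then (a.val / p ^ (r - r / 2) : ℕ) else 1

def halfEmbed (p r : ℕ) (c : ZMod (p ^ (r / 2))) : ZMod (p ^ r) :=
  (p ^ (r - r / 2) * c.val : ℕ)

variable {p r : ℕ}

theorem pow_ceilHalf_mul_pow_half : p ^ (r - r / 2) * p ^ (r / 2) = p ^ r := by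
  rw [← pow_add, Nat.sub_add_cancel (Nat.div_le_self r 2)]

theorem halfEmbed_mul_halfEmbed (c d : ZMod (p ^ (r / 2))) :
    halfEmbed p r c * halfEmbed p r d = 0 := by
  rw [halfEmbed, halfEmbed, ← Nat.cast_mul, ZMod.natCast_eq_zero_iff, mul_mul_mul_comm, ← pow_add]
  exact (pow_dvd_pow p (by omega)).mul_right _

theorem halfEmbed_mul_pow_half (c : ZMod (p ^ (r / 2))) :
    halfEmbed p r c * ((p ^ (r / 2) : ℕ) : ZMod (p ^ r)) = 0 := by
  rw [halfEmbed, ← Nat.cast_mul, ZMod.natCast_eq_zero_iff, mul_right_comm,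
    pow_ceilHalf_mul_pow_half]
  exact dvd_mul_right _ _

theorem IsMiddle.ne_zero {a : ZMod (p ^ r)} (h : IsMiddle p r a) : a ≠ 0 := by
  rintro rfl
  exact h.2 (by simp)

theorem IsMiddle.odd {a : ZMod (p ^ r)} (h : IsMiddle p r a) : Odd r := by
  by_contra hr
  obtain ⟨j, rfl⟩ := Nat.not_odd_iff_even.mp hr
  have hj : j + j - (j + j) / 2 = (j + j) / 2 := by omega
  exact h.2 (by rw [hj]; exact h.1)

section NeZero

variable [NeZero p]

theorem val_halfEmbed (c : ZMod (p ^ (r / 2))) :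
    (halfEmbed p r c).val = p ^ (r - r / 2) * c.val := by
  apply ZMod.val_cast_of_lt
  exact (Nat.mul_lt_mul_of_pos_left c.val_lt (NeZero.pos _)).trans_eq pow_ceilHalf_mul_pow_half

theorem halfEmbed_injective : Injective (halfEmbed p r) := fun c d h => by
  have h := congrArg ZMod.val h
  rw [val_halfEmbed, val_halfEmbed] at h
  exact ZMod.val_injective _ (Nat.eq_of_mul_eq_mul_left (NeZero.pos (p ^ (r - r / 2))) h)

theorem not_isMiddle_halfEmbed (c : ZMod (p ^ (r / 2))) : ¬IsMiddle p r (halfEmbed p r c) :=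
  fun h => h.2 (val_halfEmbed c ▸ dvd_mul_right _ _)

theorem halfEmbed_halfColor {a : ZMod (p ^ r)} (ha : p ^ (r - r / 2) ∣ a.val) :
    halfEmbed p r (halfColor p r a) = a := by
  have hlt : a.val / p ^ (r - r / 2) < p ^ (r / 2) := by
    apply Nat.div_lt_of_lt_mul
    rw [pow_ceilHalf_mul_pow_half]
    exact a.val_lt
  apply ZMod.val_injective
  rw [val_halfEmbed, halfColor, if_pos ha, ZMod.val_cast_of_lt hlt, Nat.mul_div_cancel' ha]

end NeZero

variable [hp : Fact p.Prime]

theorem isMiddle_pow_half (hr : Odd r) : IsMiddle p r (p ^ (r / 2) : ℕ) := by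
  obtain ⟨j, rfl⟩ := hr
  rw [IsMiddle, ZMod.val_cast_of_lt (Nat.pow_lt_pow_right hp.out.one_lt (by omega))]
  refine ⟨dvd_rfl, ?_⟩
  rw [Nat.pow_dvd_pow_iff_le_right hp.out.one_lt]
  omega

theorem IsMiddle.mul_ne_zero {a b : ZMod (p ^ r)} (ha : IsMiddle p r a) (hb : IsMiddle p r b) :
    a * b ≠ 0 := by
  obtain ⟨j, rfl⟩ := ha.odd
  rw [Ne, ZMod.mul_eq_zero_iff_dvd_val_mul_val_s12]
  exact hp.out.not_pow_dvd_mul ha.2 hb.2 (by omega)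

theorem pow_ceilHalf_succ_dvd_of_mul_eq_zero {a b : ZMod (p ^ r)} (ha : ¬p ^ (r / 2) ∣ a.val)
    (hab : a * b = 0) : p ^ (r - r / 2 + 1) ∣ b.val := by
  by_contra hb
  exact hp.out.not_pow_dvd_mul ha hb (by omega) ((ZMod.mul_eq_zero_iff_dvd_val_mul_val_s12 a b).1 hab)
theorem eq_of_halfColor_eq {a b : ZMod (p ^ r)} (hab : a * b = 0) (ha : ¬IsMiddle p r a)
    (hb : ¬IsMiddle p r b) (h : halfColor p r a = halfColor p r b) : a = b := by
  have shallow : ∀ x : ZMod (p ^ r), ¬IsMiddle p r x → ¬p ^ (r - r / 2) ∣ x.val →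
      ¬p ^ (r / 2) ∣ x.val := fun x hx hm hh => hx ⟨hh, hm⟩
  wlog hda : p ^ (r - r / 2) ∣ a.val generalizing a b
  · by_cases hdb : p ^ (r - r / 2) ∣ b.val
    · exact (this (mul_comm a b ▸ hab) hb ha h.symm hdb).symm
    · exact absurd (Nat.pow_dvd_of_le_of_pow_dvd (by omega)
        (pow_ceilHalf_succ_dvd_of_mul_eq_zero (shallow a ha hda) hab)) (shallow b hb hdb)
  by_cases hdb : p ^ (r - r / 2) ∣ b.val
  · rw [← halfEmbed_halfColor hda, h, halfEmbed_halfColor hdb]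
  · have hb' := shallow b hb hdb
    have hh : r / 2 ≠ 0 := fun h0 => hb' (by simp [h0])
    have ha1 : a = halfEmbed p r 1 := by rw [← halfEmbed_halfColor hda, h, halfColor, if_neg hdb]
    have hdvd := pow_ceilHalf_succ_dvd_of_mul_eq_zero hb' (mul_comm a b ▸ hab)
    rw [ha1, val_halfEmbed, ZMod.val_one_eq_one_mod,
      Nat.mod_eq_of_lt (Nat.one_lt_pow hh hp.out.one_lt), mul_one,
      Nat.pow_dvd_pow_iff_le_right hp.out.one_lt] at hdvd
    omega

end PrimePowerFactor

section PrimePowerProduct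

variable {ι : Type*} [DecidableEq ι] (p r : ι → ℕ)

abbrev PrimePowColors : Type _ := (∀ i, ZMod (p i ^ (r i / 2))) ⊕ {i // Odd (r i)}

def primePowClique : PrimePowColors p r → ∀ i, ZMod (p i ^ r i)
  | .inl c => fun i => halfEmbed (p i) (r i) (c i)
  | .inr i => Pi.single i.1 (p i.1 ^ (r i.1 / 2) : ℕ)

variable {p r}

theorem primePowClique_mul_eq_zero (x y : PrimePowColors p r) (hxy : x ≠ y) :
    primePowClique p r x * primePowClique p r y = 0 := by
  have h_inl_inr : ∀ c (j : {i // Odd (r i)}),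
      primePowClique p r (.inl c) * primePowClique p r (.inr j) = 0 := fun c j => by
    rw [primePowClique, primePowClique, ← Pi.single_mul_right, halfEmbed_mul_pow_half,
      Pi.single_zero]
  rcases x with c | i <;> rcases y with d | j
  · exact funext fun i => halfEmbed_mul_halfEmbed _ _
  · exact h_inl_inr c j
  · exact mul_comm (primePowClique p r _) _ ▸ h_inl_inr d i
  · have hij : i.1 ≠ j.1 := fun h => hxy (congrArg Sum.inr (Subtype.ext h))
    rw [primePowClique, primePowClique, ← Pi.single_mul_right, Pi.single_eq_of_ne hij.symm,
      zero_mul, Pi.single_zero]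

variable [∀ i, Fact (p i).Prime]

theorem primePowClique_injective : Injective (primePowClique p r) := by
  rintro (c | ⟨i, hi⟩) (d | ⟨j, hj⟩) h
  · exact congrArg Sum.inl (funext fun i => halfEmbed_injective (congrFun h i))
  · have h := congrFun h j
    simp only [primePowClique, Pi.single_eq_same] at h
    exact absurd (h ▸ isMiddle_pow_half hj) (not_isMiddle_halfEmbed _)
  · have h := congrFun h i
    simp only [primePowClique, Pi.single_eq_same] at h
    exact absurd (h ▸ isMiddle_pow_half hi) (not_isMiddle_halfEmbed _)
  · obtain rfl | hij := eq_or_ne i j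
    · rfl
    · have h := congrFun h i
      simp only [primePowClique, Pi.single_eq_same, Pi.single_eq_of_ne hij] at h
      exact absurd h (isMiddle_pow_half hi).ne_zero

open Classical in
noncomputable def primePowColoring :
    (gammaZero (∀ i, ZMod (p i ^ r i))).Coloring (PrimePowColors p r) :=
  Coloring.mk
    (fun x => if h : ∃ i, IsMiddle (p i) (r i) (x i) then .inr ⟨h.choose, h.choose_spec.odd⟩
      else .inl fun i => halfColor (p i) (r i) (x i))
    fun {x y} ⟨hne, hxy⟩ hc => by
      split_ifs at hc with hx hy hy
      · have hi : hx.choose = hy.choose := congrArg Subtype.val (Sum.inr_injective hc)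
        exact hx.choose_spec.mul_ne_zero (hi ▸ hy.choose_spec) (congrFun hxy _)
      · simp only [not_exists] at hx hy
        exact hne (funext fun i => eq_of_halfColor_eq (congrFun hxy i) (hx i) (hy i)
          (congrFun (Sum.inl_injective hc) i))

end PrimePowerProduct

theorem stmt12_general (n k : ℕ) (p r : Fin k → ℕ)
    (hp : ∀ i, (p i).Prime) :
    (gammaZero ((Fin n → ℤ) × ∀ i, ZMod (p i ^ r i))).chromaticNumber =
      cliqueNumE (gammaZero ((Fin n → ℤ) × ∀ i, ZMod (p i ^ r i))) ∧
    cliqueNumE (gammaZero ((Fin n → ℤ) × ∀ i, ZMod (p i ^ r i))) =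
      ((∏ i, p i ^ (r i / 2) + (Finset.univ.filter fun i => Odd (r i)).card + n : ℕ) : ℕ∞) := by
  have := fun i => Fact.mk (hp i)
  obtain ⟨hχ, hω⟩ := chromaticNumber_eq_cliqueNumE_of_coloring
    (extendByDomain_injective (D := ℤ) (ι := Fin n) (primePowClique_injective (p := p) (r := r)))
    (gammaZero_isClique_range (extendByDomain_mul_eq_zero primePowClique_mul_eq_zero))
    primePowColoring.extendByDomain
  refine ⟨hχ, hω.trans ?_⟩
  simp [Fintype.card_sum, Fintype.card_pi, Fintype.card_subtype]

theorem stmt12 (n k : ℕ) (hnk : 1 ≤ n + k) (p r : Fin k → ℕ)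
    (hp : ∀ i, (p i).Prime) (hr : ∀ i, 0 < r i) :
    (gammaZero ((Fin n → ℤ) × ∀ i, ZMod (p i ^ r i))).chromaticNumber =
      cliqueNumE (gammaZero ((Fin n → ℤ) × ∀ i, ZMod (p i ^ r i))) ∧
    cliqueNumE (gammaZero ((Fin n → ℤ) × ∀ i, ZMod (p i ^ r i))) =
      ((∏ i, p i ^ (r i / 2) + (Finset.univ.filter fun i => Odd (r i)).card + n : ℕ) : ℕ∞) :=
  stmt12_general n k p r hp
end

section
/- Let p be a prime number and r an odd integer with r ≥ 3, and let R = Z/p^r. Then χ(complement of Γ(R)) = ω(complement of Γ(R)) = p^{r−1} − p^{(r−1)/2}. -/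
/-- The set `Z(R) \ {0}` of nonzero zero-divisors of `R`. -/
def zdStar (R : Type*) [CommRing R] : Set R :=
  {x | x ≠ 0 ∧ ∃ y, y ≠ 0 ∧ x * y = 0}

/-- The Anderson–Livingston zero-divisor graph `Γ(R)`: vertices are the nonzero
zero-divisors of `R`, and two distinct vertices `x`, `y` are adjacent iff `x * y = 0`.
It is the subgraph of `Γ₀(R)` induced on `Z(R) \ {0}`. -/
def gammaGraph (R : Type*) [CommRing R] : SimpleGraph (zdStar R) :=
  (gammaZero R).induce (zdStar R)

/-!
Write `v x` for the `p`-adic valuation of `x.val`, and `r = 2k + 1`. For nonzero `x, y` in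
`ℤ/p^r`, `x * y = 0` iff `r ≤ v x + v y`, and the nonzero zero-divisors are the `x ≠ 0` with
`0 < v x`. In the complement of `Γ` the zero-divisors with `v ≤ k` therefore form a clique,
of size `p^(r-1) - p^k`, whereas those with `v > k`, together with `p^k`, form an independent
set. Colouring the clique injectively and giving that independent set the colour of `p^k`
shows that the chromatic number is at most the size of the clique.
-/

open Finset

namespace SimpleGraph

variable {V : Type*} (G : SimpleGraph V)

lemma cliqueNumE_le_chromaticNumber : cliqueNumE G ≤ G.chromaticNumber :=
  iSup₂_le fun _ hs => hs.card_le_chromaticNumber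

lemma colorable_card_of_isIndepSet_insert_compl {s : Finset V} {c : V} (hc : c ∈ s)
    (hind : G.IsIndepSet (insert c (s : Set V)ᶜ)) : G.Colorable s.card := by
  classical
  have hcol : G.Coloring s := Coloring.mk (fun v => if h : v ∈ s then ⟨v, h⟩ else ⟨c, hc⟩) <| by
    intro v w hadj hvw
    have hind' := fun hv hw hne => hind hv hw hne hadj
    by_cases hv : v ∈ s <;> by_cases hw : w ∈ s <;>
      simp only [hv, hw, dite_true, dite_false, Subtype.mk.injEq] at hvw
    · exact G.ne_of_adj hadj hvw
    · subst hvw; exact hind' (.inl rfl) (.inr hw) (G.ne_of_adj hadj)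
    · subst hvw; exact hind' (.inr hv) (.inl rfl) (G.ne_of_adj hadj)
    · exact hind' (.inr hv) (.inr hw) (G.ne_of_adj hadj)
  simpa using hcol.colorable

lemma chromaticNumber_eq_and_cliqueNumE_eq_of_isClique_of_colorable {s : Finset V}
    (hs : G.IsClique (s : Set V)) (hcol : G.Colorable s.card) :
    G.chromaticNumber = s.card ∧ cliqueNumE G = s.card := by
  have hle : (s.card : ℕ∞) ≤ cliqueNumE G := le_iSup₂_of_le s hs le_rfl
  have hχ := hcol.chromaticNumber_le
  have hω := G.cliqueNumE_le_chromaticNumber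
  exact ⟨le_antisymm hχ (hle.trans hω), le_antisymm (hω.trans hχ) hle⟩

end SimpleGraph

lemma compl_gammaGraph_adj {R : Type*} [CommRing R] {x y : zdStar R} :
    (gammaGraph R)ᶜ.Adj x y ↔ x ≠ y ∧ (x : R) * y ≠ 0 := by
  simp only [SimpleGraph.compl_adj, gammaGraph, SimpleGraph.induce_adj, gammaZero, ne_eq,
    Subtype.coe_ne_coe, not_and]
  tauto

namespace ZMod

lemma card_filter_dvd_val {n d : ℕ} [NeZero n] (hd : d ∣ n) :
    #{x : ZMod n | d ∣ x.val} = n / d := by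
  obtain ⟨m, rfl⟩ := hd
  have hd0 : 0 < d := Nat.pos_of_ne_zero (left_ne_zero_of_mul (NeZero.ne (d * m)))
  have hval {j : ℕ} (hj : j < m) : ((d * j : ℕ) : ZMod (d * m)).val = d * j :=
    val_natCast_of_lt (Nat.mul_lt_mul_of_pos_left hj hd0)
  have himage : ({x : ZMod (d * m) | d ∣ x.val} : Finset _) =
      (range m).image fun j => ((d * j : ℕ) : ZMod (d * m)) := by
    ext x
    simp only [mem_filter, mem_univ, true_and, mem_image, mem_range]
    constructor
    · rintro ⟨j, hj⟩
      have hjm : j < m := Nat.lt_of_mul_lt_mul_left (hj ▸ x.val_lt)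
      exact ⟨j, hjm, val_injective _ (by rw [hval hjm, hj])⟩
    · rintro ⟨j, hj, rfl⟩
      exact ⟨j, hval hj⟩
  rw [himage, card_image_of_injOn, card_range, Nat.mul_div_cancel_left m hd0]
  intro i hi j hj hij
  have := congrArg val hij
  rw [hval (mem_range.mp hi), hval (mem_range.mp hj)] at this
  exact Nat.eq_of_mul_eq_mul_left hd0 this

variable {p r : ℕ} [hp : Fact p.Prime]

lemma factorization_val_lt {x : ZMod (p ^ r)} (hx : x ≠ 0) : x.val.factorization p < r := by
  have hle : p ^ x.val.factorization p ≤ x.val :=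
    Nat.ordProj_le p ((ZMod.val_ne_zero x).mpr hx)
  exact (Nat.pow_lt_pow_iff_right hp.out.one_lt).mp (hle.trans_lt x.val_lt)

lemma mul_eq_zero_iff_le_factorization_val_add {x y : ZMod (p ^ r)} (hx : x ≠ 0) (hy : y ≠ 0) :
    x * y = 0 ↔ r ≤ x.val.factorization p + y.val.factorization p := by
  have hx' := (ZMod.val_ne_zero x).mpr hx
  have hy' := (ZMod.val_ne_zero y).mpr hy
  have hdvd : x * y = 0 ↔ p ^ r ∣ x.val * y.val := by
    rw [← ZMod.natCast_eq_zero_iff, Nat.cast_mul, ZMod.natCast_zmod_val, ZMod.natCast_zmod_val]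
  rw [hdvd, hp.out.pow_dvd_iff_le_factorization (mul_ne_zero hx' hy'),
    Nat.factorization_mul hx' hy', Finsupp.add_apply]

lemma val_natCast_pow {j : ℕ} (hj : j < r) : ((p : ZMod (p ^ r)) ^ j).val = p ^ j := by
  rw [← Nat.cast_pow, ZMod.val_natCast_of_lt (Nat.pow_lt_pow_right hp.out.one_lt hj)]

lemma natCast_pow_ne_zero {j : ℕ} (hj : j < r) : (p : ZMod (p ^ r)) ^ j ≠ 0 := by
  rw [← ZMod.val_ne_zero, val_natCast_pow hj]
  exact pow_ne_zero j hp.out.ne_zero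

lemma factorization_val_natCast_pow {j : ℕ} (hj : j < r) :
    ((p : ZMod (p ^ r)) ^ j).val.factorization p = j := by
  rw [val_natCast_pow hj, hp.out.factorization_pow, Finsupp.single_eq_same]

lemma mem_zdStar_iff {x : ZMod (p ^ r)} :
    x ∈ zdStar (ZMod (p ^ r)) ↔ x ≠ 0 ∧ 0 < x.val.factorization p := by
  constructor
  · rintro ⟨hx, y, hy, hxy⟩
    have := factorization_val_lt hy
    have := (mul_eq_zero_iff_le_factorization_val_add hx hy).mp hxy
    exact ⟨hx, by omega⟩
  · rintro ⟨hx, hpos⟩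
    have hr : r - 1 < r := by have := factorization_val_lt hx; omega
    refine ⟨hx, _, natCast_pow_ne_zero hr, ?_⟩
    rw [mul_eq_zero_iff_le_factorization_val_add hx (natCast_pow_ne_zero hr),
      factorization_val_natCast_pow hr]
    omega

lemma compl_gammaGraph_adj_iff {x y : zdStar (ZMod (p ^ r))} :
    (gammaGraph (ZMod (p ^ r)))ᶜ.Adj x y ↔ x ≠ y ∧
      (x : ZMod (p ^ r)).val.factorization p + (y : ZMod (p ^ r)).val.factorization p < r := by
  rw [compl_gammaGraph_adj, ← not_le, ← mul_eq_zero_iff_le_factorization_val_add x.2.1 y.2.1]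

lemma dvd_val_and_not_dvd_val_iff {x : ZMod (p ^ r)} {k : ℕ} :
    p ∣ x.val ∧ ¬ p ^ (k + 1) ∣ x.val ↔ x ∈ zdStar (ZMod (p ^ r)) ∧ x.val.factorization p ≤ k := by
  rcases eq_or_ne x 0 with rfl | hx
  · simp [zdStar]
  have hx' := (ZMod.val_ne_zero x).mpr hx
  rw [mem_zdStar_iff, hp.out.dvd_iff_one_le_factorization hx',
    hp.out.pow_dvd_iff_le_factorization hx']
  simp only [ne_eq, hx, not_false_eq_true, true_and]
  omega

lemma card_filter_dvd_val_and_not_dvd_val {k : ℕ} (hk : k < r) :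
    #{x : ZMod (p ^ r) | p ∣ x.val ∧ ¬ p ^ (k + 1) ∣ x.val} = p ^ (r - 1) - p ^ (r - 1 - k) := by
  have hsub : univ.filter (fun x : ZMod (p ^ r) => p ^ (k + 1) ∣ x.val) ⊆
      univ.filter fun x => p ∣ x.val :=
    monotone_filter_right _ fun _ _ => (dvd_pow_self p k.succ_ne_zero).trans
  rw [filter_and_not, card_sdiff_of_subset hsub, card_filter_dvd_val (dvd_pow_self p (by omega)),
    card_filter_dvd_val (pow_dvd_pow p hk), Nat.pow_div hk hp.out.pos,
    Nat.div_eq_of_eq_mul_left hp.out.pos (pow_sub_one_mul (by omega) p).symm, Nat.sub_sub,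
    Nat.add_comm 1 k]

lemma compl_gammaGraph_not_adj_of_le {x y : zdStar (ZMod (p ^ r))}
    (h : r ≤ (x : ZMod (p ^ r)).val.factorization p + (y : ZMod (p ^ r)).val.factorization p) :
    ¬ (gammaGraph (ZMod (p ^ r)))ᶜ.Adj x y := fun hadj =>
  (compl_gammaGraph_adj_iff.mp hadj).2.not_ge h

end ZMod

open ZMod in
theorem stmt15 (p r : ℕ) (hp : p.Prime) (hr : 3 ≤ r) (hro : Odd r) :
    ((gammaGraph (ZMod (p ^ r)))ᶜ).chromaticNumber =
      cliqueNumE ((gammaGraph (ZMod (p ^ r)))ᶜ) ∧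
    cliqueNumE ((gammaGraph (ZMod (p ^ r)))ᶜ) =
      ((p ^ (r - 1) - p ^ ((r - 1) / 2) : ℕ) : ℕ∞) := by
  classical
  have := Fact.mk hp
  obtain ⟨k, hk⟩ := hro
  let S : Finset (zdStar (ZMod (p ^ r))) :=
    ({x | p ∣ x.val ∧ ¬ p ^ (k + 1) ∣ x.val} : Finset (ZMod (p ^ r))).subtype (· ∈ zdStar _)
  have hmemS (x : zdStar (ZMod (p ^ r))) : x ∈ S ↔ (x : ZMod (p ^ r)).val.factorization p ≤ k := by
    simp [S, dvd_val_and_not_dvd_val_iff, x.2]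
  have hcardS : #S = p ^ (r - 1) - p ^ ((r - 1) / 2) := by
    rw [card_subtype, filter_true_of_mem fun x hx => (dvd_val_and_not_dvd_val_iff.mp
      (mem_filter.mp hx).2).1, card_filter_dvd_val_and_not_dvd_val (by omega)]
    congr 2
    omega
  have hclique : (gammaGraph (ZMod (p ^ r)))ᶜ.IsClique (S : Set (zdStar (ZMod (p ^ r)))) :=
    fun x hx y hy hxy => compl_gammaGraph_adj_iff.mpr
      ⟨hxy, by have := (hmemS x).mp hx; have := (hmemS y).mp hy; omega⟩
  obtain ⟨c, hvc⟩ : ∃ c : zdStar (ZMod (p ^ r)), (c : ZMod (p ^ r)).val.factorization p = k :=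
    have hvc := factorization_val_natCast_pow (p := p) (r := r) (j := k) (by omega)
    ⟨⟨_, mem_zdStar_iff.mpr ⟨natCast_pow_ne_zero (by omega), by omega⟩⟩, hvc⟩
  have hS {z} (hz : z ∈ (S : Set (zdStar (ZMod (p ^ r))))ᶜ) :
      k < (z : ZMod (p ^ r)).val.factorization p :=
    not_le.mp ((hmemS z).not.mp hz)
  have hcol : (gammaGraph (ZMod (p ^ r)))ᶜ.Colorable #S :=
    SimpleGraph.colorable_card_of_isIndepSet_insert_compl _ ((hmemS c).mpr hvc.le) <|
      Set.Pairwise.insert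
        (fun x hx y hy _ => compl_gammaGraph_not_adj_of_le (by linarith [hS hx, hS hy]))
        (fun y hy _ => have := hS hy
          ⟨compl_gammaGraph_not_adj_of_le (by omega), compl_gammaGraph_not_adj_of_le (by omega)⟩)
  obtain ⟨hχ, hω⟩ :=
    SimpleGraph.chromaticNumber_eq_and_cliqueNumE_eq_of_isClique_of_colorable _ hclique hcol
  rw [hχ, hω, hcardS]
  exact ⟨rfl, rfl⟩
end
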